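/- Exponential association (1-d version): in the setting of fitting k centers β_1,...,β_k ∈ R to data X ~ N(θ*_s, 1), if ‖β_j - θ*_s‖ ≥ ‖β_i - θ*_s‖ + (5/6)D with D ≥ 35, then E_s[Ψ_j] ≤ e^{-D²/33}, where Ψ_j = exp(-(X-β_j)²/2)/Σ_ℓ exp(-(X-β_ℓ)²/2). -/

import Mathlib

/-!
Write `L(x) = ((x - β_i)² - (x - β_j)²) / 2` for the log-ratio of the `j`-th and `i`-th softmax
weights. Then `Ψ_j ≤ min 1 (exp L) ≤ exp (t L)` for every `t ∈ [0, 1]`. Since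
`L(x) = λ (x - θ) + c` is affine, with `λ = β_j - β_i` and `c ≤ -(5/12) D (|β_i - θ| + |β_j - θ|)`,
the Gaussian moment generating function gives `E_s[exp (t L)] = exp (t² λ² / 2 + t c)`. Choosing
`t = 5D / (12 (|β_i - θ| + |β_j - θ|))` makes the exponent at most `-25 D² / 288 ≤ -D² / 33`.
-/

open MeasureTheory Real ProbabilityTheory

/-- Standard Gaussian density with mean `θ` on `ℝ`. -/
noncomputable def gauss1 (θ x : ℝ) : ℝ := (Real.sqrt (2 * π))⁻¹ * Real.exp (-(x - θ) ^ 2 / 2)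

lemma gauss1_eq_gaussianPDFReal (θ : ℝ) : gauss1 θ = gaussianPDFReal θ 1 := by
  ext x
  simp [gauss1, gaussianPDFReal]

lemma gauss1_nonneg (θ x : ℝ) : 0 ≤ gauss1 θ x := by
  rw [gauss1_eq_gaussianPDFReal]
  exact gaussianPDFReal_nonneg _ _ _

lemma gauss1_mul_exp (θ a b x : ℝ) :
    gauss1 θ x * exp (a * (x - θ) + b) = exp (a ^ 2 / 2 + b) * gauss1 (θ + a) x := by
  simp only [gauss1]
  rw [mul_comm (exp _), mul_assoc, mul_assoc, ← exp_add, ← exp_add]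
  ring_nf

lemma integrable_gauss1_mul_exp (θ a b : ℝ) :
    Integrable fun x ↦ gauss1 θ x * exp (a * (x - θ) + b) := by
  simp_rw [gauss1_mul_exp, gauss1_eq_gaussianPDFReal]
  exact (integrable_gaussianPDFReal _ _).const_mul _

lemma integral_gauss1_mul_exp (θ a b : ℝ) :
    ∫ x, gauss1 θ x * exp (a * (x - θ) + b) = exp (a ^ 2 / 2 + b) := by
  simp_rw [gauss1_mul_exp, integral_const_mul, gauss1_eq_gaussianPDFReal,
    integral_gaussianPDFReal_eq_one _ one_ne_zero, mul_one]

lemma exp_div_sum_exp_le {ι : Type*} [Fintype ι] (s : ι → ℝ) (i j : ι) {t : ℝ}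
    (ht₀ : 0 ≤ t) (ht₁ : t ≤ 1) :
    exp (s j) / ∑ ℓ, exp (s ℓ) ≤ exp (t * (s j - s i)) := by
  have hsum : ∀ m, exp (s m) ≤ ∑ ℓ, exp (s ℓ) := fun m ↦
    Finset.single_le_sum (fun ℓ _ ↦ (exp_pos (s ℓ)).le) (Finset.mem_univ m)
  rcases le_total (s j - s i) 0 with hneg | hnonneg
  · calc exp (s j) / ∑ ℓ, exp (s ℓ) ≤ exp (s j) / exp (s i) :=
          div_le_div_of_nonneg_left (exp_pos _).le (exp_pos _) (hsum i)
      _ = exp (s j - s i) := (exp_sub _ _).symm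
      _ ≤ exp (t * (s j - s i)) := exp_le_exp.2 (by nlinarith)
  · calc exp (s j) / ∑ ℓ, exp (s ℓ) ≤ 1 := (div_le_one ((exp_pos _).trans_le (hsum j))).2 (hsum j)
      _ ≤ exp (t * (s j - s i)) := one_le_exp (mul_nonneg ht₀ hnonneg)

lemma exists_exponent_le {a b D : ℝ} (hD : 0 ≤ D) (hab : |a| + 5 / 6 * D ≤ |b|) :
    ∃ t, 0 ≤ t ∧ t ≤ 1 ∧ (t * (b - a)) ^ 2 / 2 + t * ((a ^ 2 - b ^ 2) / 2) ≤ -D ^ 2 / 33 := by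
  set S := |a| + |b|
  have hDS : 5 / 6 * D ≤ S := by linarith [abs_nonneg a]
  have hS : 0 ≤ S := by positivity
  set t := 5 * D / (12 * S)
  have htS : t * S = 5 * D / 12 := by
    rcases hS.eq_or_lt with h | h
    · have : D = 0 := by linarith
      simp [t, ← h, this]
    · simp only [t]
      field_simp
  have hdiff : (b - a) ^ 2 ≤ S ^ 2 := by
    rw [← sq_abs (b - a)]
    exact pow_le_pow_left₀ (abs_nonneg _) ((abs_sub _ _).trans_eq (add_comm _ _)) 2
  have hsq : a ^ 2 - b ^ 2 ≤ -(5 / 6 * D) * S := by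
    rw [← sq_abs a, ← sq_abs b]
    nlinarith [abs_nonneg a, abs_nonneg b]
  refine ⟨t, by positivity, div_le_one_of_le₀ (by linarith) (by positivity), ?_⟩
  calc (t * (b - a)) ^ 2 / 2 + t * ((a ^ 2 - b ^ 2) / 2)
      ≤ (t * S) ^ 2 / 2 + t * (-(5 / 6 * D) * S / 2) := by
        gcongr ?_ + t * ?_
        · rw [mul_pow, mul_pow]
          gcongr
        · linarith
    _ = -(25 / 288) * D ^ 2 := by
        linear_combination ((t * S + 5 * D / 12) / 2 - 5 * D / 12) * htS
    _ ≤ -D ^ 2 / 33 := by nlinarith [sq_nonneg D]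

/-- **Exponential association** (Lemma, 1-d): if `|β_j - θ*_s| ≥ |β_i - θ*_s| + (5/6)D`
with `D ≥ 35`, then `E_s[Ψ_j] ≤ e^{-D²/33}`. -/
theorem exponential_association {k : ℕ} (β : Fin k → ℝ) (θ : ℝ) (i j : Fin k)
    (D : ℝ) (hD : 35 ≤ D)
    (hdom : |β i - θ| + 5 / 6 * D ≤ |β j - θ|) :
    ∫ x, gauss1 θ x *
        (Real.exp (-(x - β j) ^ 2 / 2) / ∑ ℓ, Real.exp (-(x - β ℓ) ^ 2 / 2))
      ≤ Real.exp (-D ^ 2 / 33) := by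
  obtain ⟨t, ht₀, ht₁, hexponent⟩ := exists_exponent_le (by linarith) hdom
  set a := β i - θ
  set b := β j - θ
  have hpointwise : ∀ x, gauss1 θ x *
      (exp (-(x - β j) ^ 2 / 2) / ∑ ℓ, exp (-(x - β ℓ) ^ 2 / 2))
      ≤ gauss1 θ x * exp (t * (b - a) * (x - θ) + t * ((a ^ 2 - b ^ 2) / 2)) := fun x ↦ by
    gcongr
    · exact gauss1_nonneg θ x
    refine (exp_div_sum_exp_le (fun ℓ ↦ -(x - β ℓ) ^ 2 / 2) i j ht₀ ht₁).trans_eq ?_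
    congr 1
    ring
  calc _ ≤ ∫ x, gauss1 θ x * exp (t * (b - a) * (x - θ) + t * ((a ^ 2 - b ^ 2) / 2)) :=
        integral_mono_of_nonneg (.of_forall fun x ↦ mul_nonneg (gauss1_nonneg θ x) (by positivity))
          (integrable_gauss1_mul_exp _ _ _) (.of_forall hpointwise)
    _ = exp ((t * (b - a)) ^ 2 / 2 + t * ((a ^ 2 - b ^ 2) / 2)) := integral_gauss1_mul_exp _ _ _
    _ ≤ exp (-D ^ 2 / 33) := exp_le_exp.2 hexponent
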